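/- Let (Q,H) be a loop-free quiver with reduced homotopy, k a vertex, μ̃_k(Q,H) = (Q',H') the pre-mutation, and μ_k(Q,H) = (Q†,H†) the mutation. Then the induced functors ψ: π(Q†)/H† → π(Q')/H' and φ: π(Q')/H' → π(Q)/H are both isomorphisms of groupoids; consequently the quotient groupoid π(Q)/H is invariant under mutation: π(Q†)/H† ≅ π(Q)/H. -/

import Mathlib

namespace CMu

/-- A (locally small) quiver with vertex type `V`: a type of arrows together with
source and target maps.  All quivers in a given statement share the vertex type. -/
structure Quiv (V : Type) where
  Arrow : Type
  src : Arrow → V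
  tgt : Arrow → V

variable {V : Type}

namespace Quiv

/-- A quiver is loop-free if no arrow has equal source and target. -/
def LoopFree (Q : Quiv V) : Prop := ∀ a : Q.Arrow, Q.src a ≠ Q.tgt a

/-- A quiver is `2`-acyclic if it contains no oriented `2`-cycle, i.e. there is no pair of
arrows `a, b` with `t a = s b` and `t b = s a` (a loop forms a `2`-cycle with itself). -/
def TwoAcyclic (Q : Quiv V) : Prop :=
  ∀ a b : Q.Arrow, Q.tgt a = Q.src b → Q.tgt b = Q.src a → False

/-- A quiver is locally finite if each vertex is the source (resp. target) of only
finitely many arrows. -/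
def LocallyFinite (Q : Quiv V) : Prop :=
  ∀ v : V, {a : Q.Arrow | Q.src a = v}.Finite ∧ {a : Q.Arrow | Q.tgt a = v}.Finite

/-- The number of arrows from `i` to `j`. -/
noncomputable def nArrows (Q : Quiv V) (i j : V) : ℕ :=
  Nat.card {a : Q.Arrow // Q.src a = i ∧ Q.tgt a = j}

end Quiv

/-- A step of a walk in the underlying graph of a quiver: an arrow traversed forwards,
or an arrow traversed backwards (its formal inverse). -/
inductive Step (Q : Quiv V) : V → V → Type where
  | fwd (a : Q.Arrow) : Step Q (Q.src a) (Q.tgt a)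
  | bwd (a : Q.Arrow) : Step Q (Q.tgt a) (Q.src a)

/-- The inverse of a step. -/
def Step.inv {Q : Quiv V} : {x y : V} → Step Q x y → Step Q y x
  | _, _, .fwd a => .bwd a
  | _, _, .bwd a => .fwd a

/-- A step is forward if it traverses an arrow in its own direction. -/
def Step.IsFwd {Q : Quiv V} : {x y : V} → Step Q x y → Prop
  | _, _, .fwd _ => True
  | _, _, .bwd _ => False

/-- A walk in (the underlying graph of) a quiver `Q` from `x` to `y`:
a word in the arrows of `Q` and their formal inverses. -/
inductive Walk (Q : Quiv V) : V → V → Type where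
  | nil (v : V) : Walk Q v v
  | cons {x y z : V} (e : Step Q x y) (w : Walk Q y z) : Walk Q x z

namespace Walk

/-- Composition (concatenation) of walks. -/
def comp {Q : Quiv V} : {x y z : V} → Walk Q x y → Walk Q y z → Walk Q x z
  | _, _, _, .nil _, w => w
  | _, _, _, .cons e u, w => .cons e (comp u w)

/-- The walk consisting of a single step. -/
def single {Q : Quiv V} {x y : V} (e : Step Q x y) : Walk Q x y := .cons e (.nil _)

/-- The inverse (reversal) of a walk. -/
def inv {Q : Quiv V} : {x y : V} → Walk Q x y → Walk Q y x
  | _, _, .nil v => .nil v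
  | _, _, .cons e u => (inv u).comp (single e.inv)

/-- Transport a walk along equalities of its endpoints. -/
def cast {Q : Quiv V} {x y x' y' : V} (hx : x = x') (hy : y = y') (w : Walk Q x y) :
    Walk Q x' y' := by subst hx; subst hy; exact w

/-- A walk is a (directed) path if all of its steps are forward. -/
def AllFwd {Q : Quiv V} : {x y : V} → Walk Q x y → Prop
  | _, _, .nil _ => True
  | _, _, .cons e w => e.IsFwd ∧ AllFwd w

end Walk

/-- A quiver is acyclic if it contains no (nontrivial) oriented cycle. -/
def Quiv.Acyclic (Q : Quiv V) : Prop :=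
  ∀ (v : V) (w : Walk Q v v), w.AllFwd → w = .nil v

/-- A quiver is connected if any two vertices are joined by a walk. -/
def Quiv.Connected (Q : Quiv V) : Prop := ∀ x y : V, Nonempty (Walk Q x y)

/-- Free homotopy of walks: the equivalence relation on walks generated by cancelling
`e ⬝ e⁻¹`.  Two walks are homotopic iff they have the same reduction, so that the morphisms
of the free groupoid `π(Q)` from `x` to `y` are the homotopy classes of walks from `x` to `y`. -/
inductive WalkHtpy (Q : Quiv V) : {x y : V} → Walk Q x y → Walk Q x y → Prop
  | refl {x y : V} (w : Walk Q x y) : WalkHtpy Q w w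
  | symm {x y : V} {w u : Walk Q x y} : WalkHtpy Q w u → WalkHtpy Q u w
  | trans {x y : V} {w u t : Walk Q x y} : WalkHtpy Q w u → WalkHtpy Q u t → WalkHtpy Q w t
  | cancel {x y z : V} (e : Step Q x y) (w : Walk Q x z) :
      WalkHtpy Q (.cons e (.cons e.inv w)) w
  | congr {x y z : V} (e : Step Q x y) {w u : Walk Q y z} :
      WalkHtpy Q w u → WalkHtpy Q (.cons e w) (.cons e u)

/-- A family of sets of cyclic walks, one at each vertex.  Such a family, when it satisfies
`IsHomotopy`, encodes a normal subgroupoid (a *homotopy*) `H` of the free groupoid `π(Q)`: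
`H(v,v)` is the set of homotopy classes of the walks in the family at `v`. -/
def HSet (Q : Quiv V) := ∀ v : V, Set (Walk Q v v)

/-- `H` is a homotopy on `Q` (a normal subgroupoid of the free groupoid `π(Q)`):
each `H v` is closed under free homotopy of walks, contains the identity, is closed under
composition and inverse (so it determines a subgroup of `π₁(Q,v) = π(Q)(v,v)`), and the family
is closed under conjugation by arbitrary walks. -/
structure IsHomotopy (Q : Quiv V) (H : HSet Q) : Prop where
  htpy_mem : ∀ {v : V} {w u : Walk Q v v}, WalkHtpy Q w u → w ∈ H v → u ∈ H v
  nil_mem : ∀ v : V, Walk.nil v ∈ H v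
  comp_mem : ∀ {v : V} {w u : Walk Q v v}, w ∈ H v → u ∈ H v → w.comp u ∈ H v
  inv_mem : ∀ {v : V} {w : Walk Q v v}, w ∈ H v → w.inv ∈ H v
  conj_mem : ∀ {x y : V} (g : Walk Q x y) {w : Walk Q x x},
    w ∈ H x → (g.inv.comp (w.comp g)) ∈ H y

/-- The oriented `2`-cycle determined by arrows `a : i → j` and `b : j → i`, as a cyclic
walk based at `i = s a`. -/
def twoCycle {Q : Quiv V} (a b : Q.Arrow) (h : Q.tgt a = Q.src b) (h' : Q.tgt b = Q.src a) :
    Walk Q (Q.src a) (Q.src a) :=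
  Walk.cons (.fwd a) ((Walk.single (.fwd b)).cast h.symm h')

/-- A homotopy is reduced if it contains no oriented `2`-cycle of `Q`. -/
def IsReducedH (Q : Quiv V) (H : HSet Q) : Prop :=
  ∀ (a b : Q.Arrow) (h : Q.tgt a = Q.src b) (h' : Q.tgt b = Q.src a),
    twoCycle a b h h' ∉ H (Q.src a)

/-- Two walks `w, u : x → y` represent the same morphism of the quotient groupoid
`π(Q)/H` iff `w⁻¹ u ∈ H`. -/
def HEquiv {Q : Quiv V} (H : HSet Q) {x y : V} (w u : Walk Q x y) : Prop :=
  w.inv.comp u ∈ H y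

/-- The trivial homotopy `𝟙`: only the identity morphisms, i.e. only walks homotopic
to the constant walk. -/
def trivH (Q : Quiv V) : HSet Q := fun v => {w | WalkHtpy Q w (.nil v)}

/-- The maximal homotopy `π(Q)`: all cyclic walks. -/
def maxH (Q : Quiv V) : HSet Q := fun _ => Set.univ

/-- The normal subgroupoid (homotopy) generated by a family `S` of cyclic walks. -/
def genH (Q : Quiv V) (S : HSet Q) : HSet Q := fun v =>
  {w | ∀ K : HSet Q, IsHomotopy Q K → (∀ x, S x ⊆ K x) → w ∈ K v}

/-- The squares of all cyclic walks; `genH Q (sqGens Q)` is the normal subgroupoid `π(Q)²`. -/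
def sqGens (Q : Quiv V) : HSet Q := fun v => {w | ∃ u : Walk Q v v, w = u.comp u}

/-- A morphism from the free groupoid on `Q` to the free groupoid on `R` (both over the same
vertex type, fixing all vertices), given by a choice of a walk in `R` for every arrow of `Q`. -/
structure QMap (Q R : Quiv V) where
  toWalk : (a : Q.Arrow) → Walk R (Q.src a) (Q.tgt a)

namespace QMap

/-- The image of a step. -/
def mapStep {Q R : Quiv V} (F : QMap Q R) : {x y : V} → Step Q x y → Walk R x y
  | _, _, .fwd a => F.toWalk a
  | _, _, .bwd a => (F.toWalk a).inv

/-- The induced map on walks. -/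
def mapWalk {Q R : Quiv V} (F : QMap Q R) : {x y : V} → Walk Q x y → Walk R x y
  | _, _, .nil v => .nil v
  | _, _, .cons e w => (F.mapStep e).comp (F.mapWalk w)

/-- Composition of `QMap`s. -/
def comp {Q R S : Quiv V} (F : QMap Q R) (G : QMap R S) : QMap Q S :=
  ⟨fun a => G.mapWalk (F.toWalk a)⟩

end QMap

/-- The kernel, relative to a homotopy `H` on `R`, of the functor `π(Q) → π(R)/H`
induced by a `QMap`: all cyclic walks whose image lies in `H`. -/
def kerH {Q R : Quiv V} (F : QMap Q R) (H : HSet R) : HSet Q :=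
  fun v => {w | F.mapWalk w ∈ H v}

/-- A (vertex-fixing) isomorphism of quivers over the same vertex type. -/
structure QIso (Q R : Quiv V) where
  arr : Q.Arrow ≃ R.Arrow
  src_eq : ∀ a, R.src (arr a) = Q.src a
  tgt_eq : ∀ a, R.tgt (arr a) = Q.tgt a

/-- The `QMap` underlying a quiver isomorphism. -/
def QIso.toQMap {Q R : Quiv V} (f : QIso Q R) : QMap Q R :=
  ⟨fun a => (Walk.single (.fwd (f.arr a))).cast (f.src_eq a) (f.tgt_eq a)⟩

/-- The pre-mutation `μ̃_k(Q)` of a loop-free quiver `Q` at the vertex `k`: arrows of `Q` not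
incident to `k` are kept, arrows incident to `k` are replaced by reversed arrows `γ*`, and
for every pair of arrows `α, β` with `s α = t β = k` and `s β ≠ t α` a new composite arrow
`[αβ] : s β → t α` is added. -/
def preMut (Q : Quiv V) (k : V) : Quiv V where
  Arrow := {a : Q.Arrow // Q.src a ≠ k ∧ Q.tgt a ≠ k} ⊕
    ({a : Q.Arrow // Q.src a = k ∨ Q.tgt a = k} ⊕
     {p : Q.Arrow × Q.Arrow // Q.src p.1 = k ∧ Q.tgt p.2 = k ∧ Q.src p.2 ≠ Q.tgt p.1})
  src x := match x with
    | .inl a => Q.src a.1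
    | .inr (.inl a) => Q.tgt a.1
    | .inr (.inr p) => Q.src p.1.2
  tgt x := match x with
    | .inl a => Q.tgt a.1
    | .inr (.inl a) => Q.src a.1
    | .inr (.inr p) => Q.tgt p.1.1

/-- The canonical functor `φ : π(μ̃_k Q) → π(Q)` (to be composed with `π(Q) → π(Q)/H`):
it fixes all vertices, sends a kept arrow `γ` to `γ`, a reversed arrow `γ*` to `γ⁻¹`, and a
composite arrow `[αβ]` to the walk `αβ`. -/
def phiQMap (Q : Quiv V) (k : V) : QMap (preMut Q k) Q where
  toWalk x := match x with
    | .inl a => Walk.single (.fwd a.1)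
    | .inr (.inl a) => Walk.single (.bwd a.1)
    | .inr (.inr p) => Walk.cons (.fwd p.1.2)
        ((Walk.single (.fwd p.1.1)).cast (p.2.1.trans p.2.2.1.symm) rfl)

/-- The homotopy `H' = ker (φ : π(μ̃_k Q) → π(Q)/H)` of the pre-mutation `μ̃_k(Q,H) = (Q',H')`. -/
def preH (Q : Quiv V) (H : HSet Q) (k : V) : HSet (preMut Q k) := kerH (phiQMap Q k) H

/-- The subquiver of `R` obtained by deleting the arrows in `S`. -/
def restrictQ (R : Quiv V) (S : Set R.Arrow) : Quiv V where
  Arrow := {a : R.Arrow // a ∉ S}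
  src a := R.src a.1
  tgt a := R.tgt a.1

/-- The inclusion `QMap` of a subquiver. -/
def inclQMap (R : Quiv V) (S : Set R.Arrow) : QMap (restrictQ R S) R :=
  ⟨fun a => Walk.single (.fwd a.1)⟩

/-- A deletion of `2`-cycles lying in a homotopy `H` on a quiver `R`, away from the
vertex `k`: a collection of pairwise disjoint pairs of opposite arrows `(γ, δ)` between two
distinct vertices `i ≠ j`, both different from `k`, such that each composite `2`-cycle `γδ`
lies in `H`. -/
structure TwoCycleDeletion (R : Quiv V) (H : HSet R) (k : V) where
  pairs : Set (R.Arrow × R.Arrow)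
  endpoints : ∀ q ∈ pairs, R.tgt q.1 = R.src q.2 ∧ R.tgt q.2 = R.src q.1
  src_ne_k : ∀ q ∈ pairs, R.src q.1 ≠ k
  tgt_ne_k : ∀ q ∈ pairs, R.tgt q.1 ≠ k
  src_ne_tgt : ∀ q ∈ pairs, R.src q.1 ≠ R.tgt q.1
  mem_H : ∀ q ∈ pairs, ∀ (h : R.tgt q.1 = R.src q.2) (h' : R.tgt q.2 = R.src q.1),
    twoCycle q.1 q.2 h h' ∈ H (R.src q.1)
  disjoint : ∀ q ∈ pairs, ∀ q' ∈ pairs, q ≠ q' →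
    q.1 ≠ q'.1 ∧ q.1 ≠ q'.2 ∧ q.2 ≠ q'.1 ∧ q.2 ≠ q'.2

namespace TwoCycleDeletion

variable {R : Quiv V} {H : HSet R} {k : V}

/-- The set of deleted arrows. -/
def deleted (D : TwoCycleDeletion R H k) : Set R.Arrow :=
  {a | ∃ q ∈ D.pairs, a = q.1 ∨ a = q.2}

/-- A deletion is maximal if no `2`-cycle lying in `H` (between two distinct vertices, both
different from `k`) survives it.  This is the result of the iterative deletion procedure. -/
def Maximal (D : TwoCycleDeletion R H k) : Prop :=
  ∀ γ δ : R.Arrow, γ ∉ D.deleted → δ ∉ D.deleted →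
    R.src γ ≠ k → R.tgt γ ≠ k → R.src γ ≠ R.tgt γ →
    ∀ (h : R.tgt γ = R.src δ) (h' : R.tgt δ = R.src γ),
      twoCycle γ δ h h' ∉ H (R.src γ)

end TwoCycleDeletion

/-- The quiver `Q†` of the mutation `μ_k(Q,H) = (Q†,H†)` determined by a choice `D` of
deleted `2`-cycles. -/
def mutQuiv (Q : Quiv V) (H : HSet Q) (k : V)
    (D : TwoCycleDeletion (preMut Q k) (preH Q H k) k) : Quiv V :=
  restrictQ (preMut Q k) D.deleted

/-- The homotopy `H† = ker (ψ : π(Q†) → π(Q')/H')` of the mutation `μ_k(Q,H) = (Q†,H†)`,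
where `ψ` is induced by the inclusion `Q† ⊆ Q'`. -/
def mutH (Q : Quiv V) (H : HSet Q) (k : V)
    (D : TwoCycleDeletion (preMut Q k) (preH Q H k) k) : HSet (mutQuiv Q H k D) :=
  kerH (inclQMap (preMut Q k) D.deleted) (preH Q H k)

/-- `(R, K)` is (isomorphic, by a vertex-fixing isomorphism matching the homotopies, to)
the mutation `μ_k(Q, H)` of the quiver with homotopy `(Q, H)` in direction `k`. -/
def IsMutationStep (Q : Quiv V) (H : HSet Q) (k : V) (R : Quiv V) (K : HSet R) : Prop :=
  ∃ D : TwoCycleDeletion (preMut Q k) (preH Q H k) k, D.Maximal ∧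
    ∃ f : QIso (mutQuiv Q H k D) R,
      ∀ (v : V) (w : Walk (mutQuiv Q H k D) v v),
        w ∈ mutH Q H k D v ↔ f.toQMap.mapWalk w ∈ K v

/-- A `QMap` `F : π(Q) → π(R)` induces an isomorphism of quotient groupoids
`π(Q)/H_Q ≅ π(R)/H_R` (it is the identity on objects, well defined, full and faithful
on all morphism sets). -/
structure InducesQuotIso {Q R : Quiv V} (F : QMap Q R) (HQ : HSet Q) (HR : HSet R) : Prop where
  maps : ∀ {x y : V} (w u : Walk Q x y), HEquiv HQ w u → HEquiv HR (F.mapWalk w) (F.mapWalk u)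
  full : ∀ {x y : V} (w : Walk R x y), ∃ u : Walk Q x y, HEquiv HR (F.mapWalk u) w
  faithful : ∀ {x y : V} (w u : Walk Q x y),
    HEquiv HR (F.mapWalk w) (F.mapWalk u) → HEquiv HQ w u

/-- A deletion datum for the Fomin–Zelevinsky mutation: a collection of pairwise disjoint
pairs of opposite arrows (oriented `2`-cycles). -/
structure FZDeletion (R : Quiv V) where
  pairs : Set (R.Arrow × R.Arrow)
  endpoints : ∀ q ∈ pairs, R.tgt q.1 = R.src q.2 ∧ R.tgt q.2 = R.src q.1
  disjoint : ∀ q ∈ pairs, ∀ q' ∈ pairs, q ≠ q' →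
    q.1 ≠ q'.1 ∧ q.1 ≠ q'.2 ∧ q.2 ≠ q'.1 ∧ q.2 ≠ q'.2

/-- The arrows deleted by an `FZDeletion`. -/
def FZDeletion.deleted {R : Quiv V} (D : FZDeletion R) : Set R.Arrow :=
  {a | ∃ q ∈ D.pairs, a = q.1 ∨ a = q.2}

/-- `R` is (a representative of) the Fomin–Zelevinsky mutation `μ^FZ_k(Q)` of the `2`-acyclic
quiver `Q`: it is obtained from the pre-mutation of `Q` at `k` by deleting a maximal collection
of oriented `2`-cycles (so that the result is `2`-acyclic), up to vertex-fixing isomorphism. -/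
def IsFZMut (Q : Quiv V) (k : V) (R : Quiv V) : Prop :=
  ∃ D : FZDeletion (preMut Q k),
    (restrictQ (preMut Q k) D.deleted).TwoAcyclic ∧
    Nonempty (QIso (restrictQ (preMut Q k) D.deleted) R)

/-- Two homotopies `H, H'` on `Q` are equivalent if, for every mutation sequence, the
underlying quivers of the corresponding mutated quivers with homotopies are isomorphic by
vertex-fixing isomorphisms. -/
def HomotopyEquivalent (Q : Quiv V) (H H' : HSet Q) : Prop :=
  ∀ (ℓ : ℕ) (ks : ℕ → V)
    (Qs : ℕ → Quiv V) (Hs : ∀ i, HSet (Qs i))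
    (Qs' : ℕ → Quiv V) (Hs' : ∀ i, HSet (Qs' i)),
    Qs 0 = Q → HEq (Hs 0) H → Qs' 0 = Q → HEq (Hs' 0) H' →
    (∀ i < ℓ, IsMutationStep (Qs i) (Hs i) (ks i) (Qs (i + 1)) (Hs (i + 1))) →
    (∀ i < ℓ, IsMutationStep (Qs' i) (Hs' i) (ks i) (Qs' (i + 1)) (Hs' (i + 1))) →
    Nonempty (QIso (Qs ℓ) (Qs' ℓ))

/-- The relation on vertices generated by the arrows (connectivity). -/
def adjRel (Q : Quiv V) : V → V → Prop := fun x y =>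
  ∃ a : Q.Arrow, (Q.src a = x ∧ Q.tgt a = y) ∨ (Q.src a = y ∧ Q.tgt a = x)

/-- The number of connected components of the underlying graph. -/
noncomputable def componentCount (Q : Quiv V) : ℕ := Nat.card (Quot (adjRel Q))

/-- The rank of the fundamental group of (the underlying graph of) a finite quiver:
`|Q₁| - |Q₀| + (number of connected components)`. -/
noncomputable def fundGroupRank (Q : Quiv V) : ℤ :=
  (Nat.card Q.Arrow : ℤ) - (Nat.card V : ℤ) + (componentCount Q : ℤ)

end CMu

/-! Since `H' = ker φ` and `H† = ker ψ`, the induced functors are automatically well defined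
and faithful, so only fullness needs proof, and fullness of `ψ` modulo `ker φ` follows from
fullness of `φψ` modulo `H`. Both reduce to lifting single arrows `γ` of `Q`. If `γ` touches
`k`, it is the image of `(γ*)⁻¹`. Otherwise either `γ` survives in `Q†`, or it was deleted
together with a partner `δ` whose `2`-cycle lies in `H'`; as `H` is reduced and `δ` avoids `k`,
`δ` is a composite arrow `[αβ]`, so `γ ≡ (αβ)⁻¹` modulo `H`, which is the image of `α* β*`. -/

namespace CMu

variable {V : Type}

@[simp] lemma Step.inv_inv {Q : Quiv V} {x y : V} (e : Step Q x y) : e.inv.inv = e := by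
  cases e <;> rfl

namespace Walk

variable {Q : Quiv V}

@[simp] lemma comp_nil {x y : V} (w : Walk Q x y) : w.comp (nil y) = w := by
  induction w with
  | nil => rfl
  | cons e u ih => exact congrArg (cons e) ih

lemma comp_assoc {x y z t : V} (w : Walk Q x y) (u : Walk Q y z) (v : Walk Q z t) :
    (w.comp u).comp v = w.comp (u.comp v) := by
  induction w with
  | nil => rfl
  | cons e w ih => exact congrArg (cons e) (ih u)

lemma inv_comp {x y z : V} (w : Walk Q x y) (u : Walk Q y z) :
    (w.comp u).inv = u.inv.comp w.inv := by
  induction w with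
  | nil => exact (comp_nil u.inv).symm
  | cons e w ih =>
      change (w.comp u).inv.comp (single e.inv) = u.inv.comp (w.inv.comp (single e.inv))
      rw [ih, comp_assoc]

@[simp] lemma inv_inv {x y : V} (w : Walk Q x y) : w.inv.inv = w := by
  induction w with
  | nil => rfl
  | cons e w ih =>
      change (w.inv.comp (single e.inv)).inv = _
      rw [inv_comp, ih]
      exact congrArg (cons · w) e.inv_inv

lemma cast_inv {x y x' y' : V} (w : Walk Q x y) (hx : x = x') (hy : y = y') :
    (w.cast hx hy).inv = w.inv.cast hy hx := by
  subst hx hy; rfl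

lemma inv_cons_single_cast {x y y' z : V} (e : Step Q x y) (f : Step Q y' z) (h : y' = y) :
    (cons e ((single f).cast h rfl)).inv = cons f.inv ((single e.inv).cast h.symm rfl) := by
  subst h; rfl

end Walk

namespace WalkHtpy

variable {Q : Quiv V}

lemma comp_left {x y z : V} (w : Walk Q x y) {u u' : Walk Q y z} (h : WalkHtpy Q u u') :
    WalkHtpy Q (w.comp u) (w.comp u') := by
  induction w with
  | nil => exact h
  | cons e w ih => exact .congr e (ih h)

lemma comp_inv_comp {x y z : V} (w : Walk Q x y) (u : Walk Q x z) :
    WalkHtpy Q (w.comp (w.inv.comp u)) u := by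
  induction w with
  | nil => exact .refl u
  | cons e w ih =>
      have hassoc : (Walk.cons e w).comp ((Walk.cons e w).inv.comp u)
          = .cons e (w.comp (w.inv.comp (.cons e.inv u))) :=
        congrArg (Walk.cons e) (congrArg w.comp (Walk.comp_assoc _ _ _))
      rw [hassoc]
      exact .trans (.congr e (ih _)) (.cancel e u)

lemma inv_comp_comp {x y z : V} (w : Walk Q x y) (u : Walk Q y z) :
    WalkHtpy Q (w.inv.comp (w.comp u)) u := by
  simpa using comp_inv_comp w.inv u

lemma comp_inv {x y : V} (w : Walk Q x y) : WalkHtpy Q (w.comp w.inv) (.nil x) := by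
  simpa using comp_inv_comp w (.nil x)

lemma inv_comp {x y : V} (w : Walk Q x y) : WalkHtpy Q (w.inv.comp w) (.nil y) := by
  simpa using inv_comp_comp w (.nil y)

end WalkHtpy

namespace QMap

variable {Q R S : Quiv V}

lemma mapStep_inv (F : QMap Q R) {x y : V} (e : Step Q x y) :
    F.mapStep e.inv = (F.mapStep e).inv := by
  cases e with
  | fwd a => rfl
  | bwd a => exact (Walk.inv_inv _).symm

lemma mapWalk_comp (F : QMap Q R) {x y z : V} (w : Walk Q x y) (u : Walk Q y z) :
    F.mapWalk (w.comp u) = (F.mapWalk w).comp (F.mapWalk u) := by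
  induction w with
  | nil => rfl
  | cons e w ih =>
      change (F.mapStep e).comp (F.mapWalk (w.comp u)) = ((F.mapStep e).comp (F.mapWalk w)).comp _
      rw [ih, Walk.comp_assoc]

lemma mapWalk_single (F : QMap Q R) {x y : V} (e : Step Q x y) :
    F.mapWalk (Walk.single e) = F.mapStep e :=
  Walk.comp_nil _

lemma mapWalk_inv (F : QMap Q R) {x y : V} (w : Walk Q x y) :
    F.mapWalk w.inv = (F.mapWalk w).inv := by
  induction w with
  | nil => rfl
  | cons e w ih =>
      change F.mapWalk (w.inv.comp (Walk.single e.inv)) = ((F.mapStep e).comp (F.mapWalk w)).inv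
      rw [mapWalk_comp, ih, Walk.inv_comp, mapWalk_single, mapStep_inv]

lemma mapWalk_cast (F : QMap Q R) {x y x' y' : V} (hx : x = x') (hy : y = y')
    (w : Walk Q x y) : F.mapWalk (w.cast hx hy) = (F.mapWalk w).cast hx hy := by
  subst hx hy; rfl

lemma comp_mapWalk (F : QMap Q R) (G : QMap R S) {x y : V} (w : Walk Q x y) :
    (F.comp G).mapWalk w = G.mapWalk (F.mapWalk w) := by
  induction w with
  | nil => rfl
  | cons e w ih =>
      have hstep : (F.comp G).mapStep e = G.mapWalk (F.mapStep e) := by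
        cases e with
        | fwd a => rfl
        | bwd a => exact (mapWalk_inv G _).symm
      change ((F.comp G).mapStep e).comp ((F.comp G).mapWalk w)
          = G.mapWalk ((F.mapStep e).comp (F.mapWalk w))
      rw [mapWalk_comp, hstep, ih]

lemma mapWalk_htpy (F : QMap Q R) {x y : V} {w u : Walk Q x y}
    (h : WalkHtpy Q w u) : WalkHtpy R (F.mapWalk w) (F.mapWalk u) := by
  induction h with
  | refl w => exact .refl _
  | symm _ ih => exact .symm ih
  | trans _ _ ih1 ih2 => exact .trans ih1 ih2
  | cancel e w =>
      change WalkHtpy R ((F.mapStep e).comp ((F.mapStep e.inv).comp (F.mapWalk w))) _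
      rw [mapStep_inv]
      exact .comp_inv_comp _ _
  | congr e _ ih => exact .comp_left (F.mapStep e) ih

lemma mapWalk_twoCycle (F : QMap Q R) (a b : Q.Arrow) (h : Q.tgt a = Q.src b)
    (h' : Q.tgt b = Q.src a) :
    F.mapWalk (twoCycle a b h h') = (F.toWalk a).comp ((F.toWalk b).cast h.symm h') := by
  change (F.toWalk a).comp (F.mapWalk ((Walk.single (.fwd b)).cast h.symm h')) = _
  rw [mapWalk_cast, mapWalk_single]
  rfl

def IsFull (F : QMap Q R) (HR : HSet R) : Prop :=
  ∀ {x y : V} (w : Walk R x y), ∃ u : Walk Q x y, HEquiv HR (F.mapWalk u) w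

lemma kerH_comp (F : QMap Q R) (G : QMap R S) (HS : HSet S) :
    kerH (F.comp G) HS = kerH F (kerH G HS) := by
  funext v
  ext w
  exact Iff.of_eq (congrArg (· ∈ HS v) (comp_mapWalk F G w))

end QMap

namespace IsHomotopy

variable {Q : Quiv V} {H : HSet Q} (hH : IsHomotopy Q H)
include hH

lemma comp_mem_comm {x y : V} {w : Walk Q x y} {u : Walk Q y x} (h : w.comp u ∈ H x) :
    u.comp w ∈ H y := by
  refine hH.htpy_mem ?_ (hH.conj_mem w h)
  rw [Walk.comp_assoc]
  exact .inv_comp_comp w (u.comp w)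

lemma twoCycle_mem_comm {a b : Q.Arrow} {h : Q.tgt a = Q.src b} {h' : Q.tgt b = Q.src a}
    (hab : twoCycle a b h h' ∈ H (Q.src a)) : twoCycle b a h' h ∈ H (Q.src b) := by
  have key : ∀ {x y y' x' : V} (e : Step Q x y) (f : Step Q y' x') (h : y = y') (h' : x' = x),
      Walk.cons e ((Walk.single f).cast h.symm h') ∈ H x →
        Walk.cons f ((Walk.single e).cast h'.symm h) ∈ H y' := by
    intro x y y' x' e f h h' hef
    subst h h'
    exact hH.comp_mem_comm (w := .single e) (u := .single f) hef
  exact key (.fwd a) (.fwd b) h h' hab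

lemma hequiv_refl {x y : V} (w : Walk Q x y) : HEquiv H w w :=
  hH.htpy_mem (.symm (.inv_comp w)) (hH.nil_mem y)

lemma hequiv_comp {x y z : V} {w w' : Walk Q x y} {u u' : Walk Q y z}
    (h₁ : HEquiv H w w') (h₂ : HEquiv H u u') : HEquiv H (w.comp u) (w'.comp u') := by
  refine hH.htpy_mem ?_ (hH.comp_mem (hH.conj_mem u h₁) h₂)
  simp only [Walk.inv_comp, Walk.comp_assoc]
  exact .comp_left _ (.comp_left _ (.comp_left _ (.comp_inv_comp u u')))

lemma hequiv_inv {x y : V} {w u : Walk Q x y} (h : HEquiv H w u) : HEquiv H w.inv u.inv := by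
  have hconj := hH.conj_mem w.inv (hH.inv_mem h)
  rw [Walk.inv_comp, Walk.inv_inv, Walk.comp_assoc] at hconj
  change w.inv.inv.comp u.inv ∈ H x
  rw [Walk.inv_inv]
  refine hH.htpy_mem (.comp_left w ?_) hconj
  simpa using WalkHtpy.comp_left u.inv (.comp_inv w)

lemma hequiv_inv_of_comp_mem {x y : V} {w : Walk Q x y} {u : Walk Q y x} (h : w.comp u ∈ H x) :
    HEquiv H u.inv w := by
  change u.inv.inv.comp w ∈ H y
  simpa using hH.comp_mem_comm h

end IsHomotopy

lemma kerH_isHomotopy {Q R : Quiv V} (F : QMap Q R) {K : HSet R} (hK : IsHomotopy R K) :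
    IsHomotopy Q (kerH F K) where
  htpy_mem h hw := hK.htpy_mem (F.mapWalk_htpy h) hw
  nil_mem v := hK.nil_mem v
  comp_mem {v w u} hw hu := by
    change F.mapWalk (w.comp u) ∈ K v
    rw [QMap.mapWalk_comp]
    exact hK.comp_mem hw hu
  inv_mem {v w} hw := by
    change F.mapWalk w.inv ∈ K v
    rw [QMap.mapWalk_inv]
    exact hK.inv_mem hw
  conj_mem {x y} g {w} hw := by
    change F.mapWalk (g.inv.comp (w.comp g)) ∈ K y
    rw [QMap.mapWalk_comp, QMap.mapWalk_inv, QMap.mapWalk_comp]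
    exact hK.conj_mem _ hw

namespace QMap

variable {Q R S : Quiv V}

lemma hequiv_kerH_iff (F : QMap Q R) (HR : HSet R) {x y : V} (w u : Walk Q x y) :
    HEquiv (kerH F HR) w u ↔ HEquiv HR (F.mapWalk w) (F.mapWalk u) := by
  change F.mapWalk (w.inv.comp u) ∈ HR y ↔ _
  rw [mapWalk_comp, mapWalk_inv]
  rfl

lemma IsFull.inducesQuotIso_kerH {F : QMap Q R} {HR : HSet R} (hF : F.IsFull HR) :
    InducesQuotIso F (kerH F HR) HR where
  maps w u := (F.hequiv_kerH_iff HR w u).mp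
  full := hF
  faithful w u := (F.hequiv_kerH_iff HR w u).mpr

lemma IsFull.of_comp {F : QMap Q R} {G : QMap R S} {HS : HSet S} (hFG : (F.comp G).IsFull HS) :
    F.IsFull (kerH G HS) := by
  intro x y w
  obtain ⟨u, hu⟩ := hFG (G.mapWalk w)
  exact ⟨u, (G.hequiv_kerH_iff HS _ _).mpr (by rwa [← comp_mapWalk])⟩

lemma isFull_of_forall_arrow {F : QMap Q R} {HR : HSet R} (hHR : IsHomotopy R HR)
    (hlift : ∀ a : R.Arrow, ∃ u : Walk Q (R.src a) (R.tgt a),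
      HEquiv HR (F.mapWalk u) (Walk.single (.fwd a))) :
    F.IsFull HR := by
  intro x y w
  induction w with
  | nil v => exact ⟨.nil v, hHR.hequiv_refl _⟩
  | cons e w ih =>
      obtain ⟨u₂, hu₂⟩ := ih
      obtain ⟨u₁, hu₁⟩ : ∃ u₁, HEquiv HR (F.mapWalk u₁) (Walk.single e) := by
        cases e with
        | fwd a => exact hlift a
        | bwd a =>
            obtain ⟨u, hu⟩ := hlift a
            exact ⟨u.inv, by rw [mapWalk_inv]; exact hHR.hequiv_inv hu⟩
      exact ⟨u₁.comp u₂, by rw [mapWalk_comp]; exact hHR.hequiv_comp hu₁ hu₂⟩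

end QMap

namespace TwoCycleDeletion

variable {R : Quiv V} {K : HSet R} {k : V} (D : TwoCycleDeletion R K k)

lemma notMem_deleted {x : R.Arrow} (hx : R.src x = k ∨ R.tgt x = k) : x ∉ D.deleted := by
  rintro ⟨q, hq, rfl | rfl⟩
  · exact hx.elim (D.src_ne_k q hq) (D.tgt_ne_k q hq)
  · exact hx.elim (fun h => D.tgt_ne_k q hq ((D.endpoints q hq).1.trans h))
      (fun h => D.src_ne_k q hq ((D.endpoints q hq).2.symm.trans h))

lemma exists_twoCycle_mem (hK : IsHomotopy R K) {x : R.Arrow} (hx : x ∈ D.deleted) :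
    ∃ (y : R.Arrow) (h : R.tgt x = R.src y) (h' : R.tgt y = R.src x),
      twoCycle x y h h' ∈ K (R.src x) := by
  obtain ⟨q, hq, rfl | rfl⟩ := hx
  · obtain ⟨h, h'⟩ := D.endpoints q hq
    exact ⟨q.2, h, h', D.mem_H q hq h h'⟩
  · obtain ⟨h, h'⟩ := D.endpoints q hq
    exact ⟨q.1, h', h, hK.twoCycle_mem_comm (D.mem_H q hq h h')⟩

end TwoCycleDeletion

section Mutation

variable {Q : Quiv V} {H : HSet Q} {k : V}

lemma phiQMap_isFull (hH : IsHomotopy Q H) : (phiQMap Q k).IsFull H := by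
  refine QMap.isFull_of_forall_arrow hH fun a => ?_
  by_cases hk : Q.src a = k ∨ Q.tgt a = k
  · exact ⟨.single (.bwd (Q := preMut Q k) (.inr (.inl ⟨a, hk⟩))), hH.hequiv_refl _⟩
  · exact ⟨.single (.fwd (Q := preMut Q k) (.inl ⟨a, not_or.mp hk⟩)), hH.hequiv_refl _⟩

lemma exists_mapWalk_eq_inv_composite (D : TwoCycleDeletion (preMut Q k) (preH Q H k) k)
    (p : {p : Q.Arrow × Q.Arrow // Q.src p.1 = k ∧ Q.tgt p.2 = k ∧ Q.src p.2 ≠ Q.tgt p.1}) :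
    ∃ u : Walk (restrictQ (preMut Q k) D.deleted) (Q.tgt p.1.1) (Q.src p.1.2),
      ((inclQMap _ D.deleted).comp (phiQMap Q k)).mapWalk u
        = ((phiQMap Q k).toWalk (.inr (.inr p))).inv := by
  obtain ⟨⟨α, β⟩, hα, hβ, -⟩ := p
  let αstar : (restrictQ (preMut Q k) D.deleted).Arrow :=
    ⟨.inr (.inl ⟨α, .inl hα⟩), D.notMem_deleted (.inr hα)⟩
  let βstar : (restrictQ (preMut Q k) D.deleted).Arrow :=
    ⟨.inr (.inl ⟨β, .inr hβ⟩), D.notMem_deleted (.inl hβ)⟩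
  refine ⟨.cons (.fwd αstar) ((Walk.single (.fwd βstar)).cast (hβ.trans hα.symm) rfl), ?_⟩
  exact (congrArg (Walk.cons (.bwd α)) ((QMap.mapWalk_cast _ _ _ _).trans
    (congrArg (Walk.cast _ _) (QMap.mapWalk_single _ _)))).trans
    (Walk.inv_cons_single_cast (.fwd β) (.fwd α) (hα.trans hβ.symm)).symm

lemma incl_comp_phiQMap_isFull (hH : IsHomotopy Q H) (hred : IsReducedH Q H)
    (D : TwoCycleDeletion (preMut Q k) (preH Q H k) k) :
    ((inclQMap _ D.deleted).comp (phiQMap Q k)).IsFull H := by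
  refine QMap.isFull_of_forall_arrow hH fun a => ?_
  by_cases hk : Q.src a = k ∨ Q.tgt a = k
  · let astar : (restrictQ (preMut Q k) D.deleted).Arrow :=
      ⟨.inr (.inl ⟨a, hk⟩), D.notMem_deleted hk.symm⟩
    exact ⟨.single (.bwd astar), hH.hequiv_refl _⟩
  obtain ⟨hsrc, htgt⟩ := not_or.mp hk
  let a' : (preMut Q k).Arrow := .inl ⟨a, hsrc, htgt⟩
  by_cases hdel : a' ∈ D.deleted
  swap
  · exact ⟨.single (.fwd (Q := restrictQ (preMut Q k) D.deleted) ⟨a', hdel⟩), hH.hequiv_refl _⟩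
  obtain ⟨y, h, h', hy⟩ := D.exists_twoCycle_mem (kerH_isHomotopy _ hH) hdel
  change (phiQMap Q k).mapWalk _ ∈ H _ at hy
  rw [QMap.mapWalk_twoCycle] at hy
  rcases y with b | b | p
  · exact (hred a b.1 h h' hy).elim
  · exact (b.2.elim (fun hb => hsrc (h'.symm.trans hb)) (fun hb => htgt (h.trans hb))).elim
  · obtain ⟨u, hu⟩ := exists_mapWalk_eq_inv_composite D p
    refine ⟨u.cast h' h.symm, ?_⟩
    have hG : ((inclQMap _ D.deleted).comp (phiQMap Q k)).mapWalk (u.cast h' h.symm)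
        = (((phiQMap Q k).toWalk (.inr (.inr p))).cast h.symm h').inv :=
      (QMap.mapWalk_cast _ _ _ u).trans
        ((congrArg (Walk.cast _ _) hu).trans (Walk.cast_inv _ _ _).symm)
    exact hG ▸ hH.hequiv_inv_of_comp_mem hy

end Mutation

theorem quotient_groupoid_invariant_general {V : Type} (Q : Quiv V) (H : HSet Q) (k : V)
    (hH : IsHomotopy Q H) (hred : IsReducedH Q H)
    (D : TwoCycleDeletion (preMut Q k) (preH Q H k) k) :
    InducesQuotIso (inclQMap (preMut Q k) D.deleted) (mutH Q H k D) (preH Q H k) ∧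
    InducesQuotIso (phiQMap Q k) (preH Q H k) H ∧
    InducesQuotIso ((inclQMap (preMut Q k) D.deleted).comp (phiQMap Q k))
      (mutH Q H k D) H := by
  have hfull : ((inclQMap (preMut Q k) D.deleted).comp (phiQMap Q k)).IsFull H :=
    incl_comp_phiQMap_isFull hH hred D
  refine ⟨QMap.IsFull.inducesQuotIso_kerH (QMap.IsFull.of_comp hfull),
    QMap.IsFull.inducesQuotIso_kerH (phiQMap_isFull hH), ?_⟩
  have hcomp := QMap.IsFull.inducesQuotIso_kerH hfull
  rwa [QMap.kerH_comp] at hcomp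

/-- **The quotient groupoid `π(Q)/H` is invariant under mutation** (Remark
`remark: quotient groupoid invariant`).  Let `(Q, H)` be a loop-free quiver with reduced
homotopy, `k` a vertex, `(Q', H') = μ̃_k(Q, H)` the pre-mutation and `(Q†, H†) = μ_k(Q, H)`
the mutation (given by a maximal deletion `D` of `2`-cycles lying in `H'`).  Then the functor
`ψ : π(Q†)/H† → π(Q')/H'` induced by the inclusion `Q† ⊆ Q'` and the functor
`φ : π(Q')/H' → π(Q)/H` are both isomorphisms of groupoids; consequently the composite
functor gives an isomorphism `π(Q†)/H† ≅ π(Q)/H`. -/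
theorem quotient_groupoid_invariant {V : Type} (Q : Quiv V) (H : HSet Q) (k : V)
    (hlf : Q.LocallyFinite) (hloop : Q.LoopFree)
    (hH : IsHomotopy Q H) (hred : IsReducedH Q H)
    (D : TwoCycleDeletion (preMut Q k) (preH Q H k) k) (hD : D.Maximal) :
    InducesQuotIso (inclQMap (preMut Q k) D.deleted) (mutH Q H k D) (preH Q H k) ∧
    InducesQuotIso (phiQMap Q k) (preH Q H k) H ∧
    InducesQuotIso ((inclQMap (preMut Q k) D.deleted).comp (phiQMap Q k))
      (mutH Q H k D) H :=
  quotient_groupoid_invariant_general Q H k hH hred D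

end CMu
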